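/- Least solutions of linear systems: let Q be a finite type, M : Q → Q → RegularExpression α and b : Q → RegularExpression α. Then there exists s : Q → RegularExpression α such that for every regular expression e, the vector q ↦ s q * e is the least e-solution to (M, b): (i) for all q, b q * e ⊴ s q * e; (ii) for all q, q', M q q' * (s q' * e) ⊴ s q * e; and (iii) for every s' : Q → RegularExpression α satisfying b q * e ⊴ s' q and M q q' * s' q' ⊴ s' q for all q, q', it holds that s q * e ⊴ s' q for all q. -/

import Mathlib

/-- Homomorphic extension of `h : α → K` to regular expressions. -/
def interp {α : Type*} {K : Type*} [KleeneAlgebra K] (h : α → K) :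
    RegularExpression α → K
  | .zero => 0
  | .epsilon => 1
  | .char a => h a
  | .plus e f => interp h e + interp h f
  | .comp e f => interp h e * interp h f
  | .star e => KStar.kstar (interp h e)

universe u

/-- `e ⊴ f`: under every interpretation into any Kleene algebra, `ĥ e ≤ ĥ f`. -/
def kle {α : Type*} (e f : RegularExpression α) : Prop :=
  ∀ (K : Type u) [KleeneAlgebra K] (h : α → K), interp h e ≤ interp h f

/-!
Gaussian elimination, with Arden's rule as the one-variable case: by the star induction axiom,
`a∗ * b` is the least `x` with `b + a * x ≤ x`. Solving for one unknown this way leaves a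
system in one unknown fewer, and back-substitution gives that unknown. The solution is built
syntactically from `M` and `b`, so it is the least solution under every interpretation at once.

The universe of the Kleene algebras in `kle` is a parameter, and the hypotheses on `s'` may use
a different one than the conclusion. Since `e` and `f` mention finitely many letters, any
interpretation of them factors through the Kleene algebra generated by finitely many elements,
a quotient of the regular expressions over `ULift ℕ`, which exists in every universe.
-/

open Computability RegularExpression

section Interp

variable {α K : Type*} [KleeneAlgebra K] (h : α → K)

@[simp] lemma interp_add (x y : RegularExpression α) :
    interp h (x + y) = interp h x + interp h y := rfl
@[simp] lemma interp_mul (x y : RegularExpression α) :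
    interp h (x * y) = interp h x * interp h y := rfl
@[simp] lemma interp_star (x : RegularExpression α) : interp h x.star = (interp h x)∗ := rfl

@[simp] lemma interp_list_sum (l : List (RegularExpression α)) :
    interp h l.sum = (l.map (interp h)).sum := by
  induction l with
  | nil => rfl
  | cons x l ih => simp [ih]

lemma map_interp {L : Type*} [KleeneAlgebra L] (φ : K →+* L) (hφ : ∀ a, φ a∗ = (φ a)∗) :
    ∀ x : RegularExpression α, φ (interp h x) = interp (φ ∘ h) x
  | 0 => map_zero φ
  | 1 => map_one φ
  | char _ => rfl
  | plus x y =>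
    (map_add φ _ _).trans (congrArg₂ (· + ·) (map_interp φ hφ x) (map_interp φ hφ y))
  | comp x y =>
    (map_mul φ _ _).trans (congrArg₂ (· * ·) (map_interp φ hφ x) (map_interp φ hφ y))
  | .star x => (hφ _).trans (congrArg KStar.kstar (map_interp φ hφ x))

end Interp

def RegularExpression.chars {α : Type*} : RegularExpression α → List α
  | 0 | 1 => []
  | char a => [a]
  | plus x y | comp x y => x.chars ++ y.chars
  | .star x => x.chars

lemma interp_congr {α K : Type*} [KleeneAlgebra K] {h h' : α → K} :
    ∀ x : RegularExpression α, (∀ a ∈ x.chars, h a = h' a) → interp h x = interp h' x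
  | 0, _ | 1, _ => rfl
  | char a, hx => hx a (List.mem_singleton_self a)
  | plus x y, hx =>
    congrArg₂ (· + ·) (interp_congr x fun a ha => hx a (List.mem_append_left _ ha))
      (interp_congr y fun a ha => hx a (List.mem_append_right _ ha))
  | comp x y, hx =>
    congrArg₂ (· * ·) (interp_congr x fun a ha => hx a (List.mem_append_left _ ha))
      (interp_congr y fun a ha => hx a (List.mem_append_right _ ha))
  | .star x, hx => congrArg KStar.kstar (interp_congr x hx)

lemma Finset.sum_le_of_forall_le {R ι : Type*} [IdemSemiring R] {s : Finset ι} {f : ι → R} {x : R}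
    (h : ∀ i ∈ s, f i ≤ x) : ∑ i ∈ s, f i ≤ x :=
  Finset.sum_induction f (· ≤ x) (fun _ _ => add_le) zero_le h

section LeastSolution

variable {K ι κ : Type*} [KleeneAlgebra K]

structure IsLeastSolution (M : ι → ι → K) (b s : ι → K) : Prop where
  const_le : ∀ q, b q ≤ s q
  mul_le : ∀ q q', M q q' * s q' ≤ s q
  mul_le_of_solution : ∀ (e : K) (x : ι → K),
    (∀ q, b q * e ≤ x q) → (∀ q q', M q q' * x q' ≤ x q) → ∀ q, s q * e ≤ x q

lemma IsLeastSolution.of_comp_equiv (σ : ι ≃ κ) {M : κ → κ → K} {b s : κ → K}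
    (hs : IsLeastSolution (fun i j => M (σ i) (σ j)) (b ∘ σ) (s ∘ σ)) :
    IsLeastSolution M b s where
  const_le q := by simpa using hs.const_le (σ.symm q)
  mul_le q q' := by simpa using hs.mul_le (σ.symm q) (σ.symm q')
  mul_le_of_solution e x hb hM q := by
    simpa using hs.mul_le_of_solution e (x ∘ σ) (fun i => hb (σ i)) (fun i j => hM _ _) (σ.symm q)

lemma isLeastSolution_of_isEmpty [IsEmpty ι] (M : ι → ι → K) (b s : ι → K) :
    IsLeastSolution M b s :=
  ⟨isEmptyElim, isEmptyElim, fun _ _ _ _ => isEmptyElim⟩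

section Elimination

variable {n : ℕ} (M : Fin (n + 1) → Fin (n + 1) → K) (b : Fin (n + 1) → K)

/-- The system in the unknowns `1, …, n` left after substituting Arden's rule
`x₀ = (M₀₀)∗ (b₀ + ∑ⱼ M₀ⱼ xⱼ)` for the unknown `0`. -/
def elimMatrix (i j : Fin n) : K := M i.succ j.succ + M i.succ 0 * (M 0 0)∗ * M 0 j.succ

def elimConst (i : Fin n) : K := b i.succ + M i.succ 0 * (M 0 0)∗ * b 0

def backSubst (t : Fin n → K) : Fin (n + 1) → K :=
  Fin.cases ((M 0 0)∗ * (b 0 + ∑ j, M 0 j.succ * t j)) t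

variable {M b} {t : Fin n → K}

lemma const_le_backSubst (ht : IsLeastSolution (elimMatrix M) (elimConst M b) t) (q : Fin (n + 1)) :
    b q ≤ backSubst M b t q := by
  cases q using Fin.cases with
  | zero => exact le_self_add.trans (le_mul_of_one_le_left zero_le one_le_kstar)
  | succ i => exact le_self_add.trans (ht.const_le i)

lemma mul_backSubst_le (ht : IsLeastSolution (elimMatrix M) (elimConst M b) t)
    (q q' : Fin (n + 1)) : M q q' * backSubst M b t q' ≤ backSubst M b t q := by
  cases q using Fin.cases <;> cases q' using Fin.cases
  case zero.zero =>
    simpa only [backSubst, Fin.cases_zero, ← mul_assoc] using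
      mul_le_mul_left (mul_kstar_le_kstar (a := M 0 0)) _
  case zero.succ j =>
    have : M 0 j.succ * t j ≤ ∑ j, M 0 j.succ * t j :=
      Finset.single_le_sum (f := fun j => M 0 j.succ * t j) (fun _ _ => zero_le)
        (Finset.mem_univ j)
    exact this.trans (le_add_self.trans (le_mul_of_one_le_left zero_le one_le_kstar))
  case succ.zero i =>
    simp only [backSubst, Fin.cases_zero, Fin.cases_succ, ← mul_assoc, mul_add, Finset.mul_sum]
    refine add_le (le_add_self.trans (ht.const_le i)) (Finset.sum_le_of_forall_le ?_)
    intro j _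
    calc M i.succ 0 * (M 0 0)∗ * M 0 j.succ * t j ≤ elimMatrix M i j * t j :=
          mul_le_mul_left le_add_self _
      _ ≤ t i := ht.mul_le i j
  case succ.succ i j => exact (mul_le_mul_left le_self_add _).trans (ht.mul_le i j)

lemma backSubst_mul_le (ht : IsLeastSolution (elimMatrix M) (elimConst M b) t) {e : K}
    {x : Fin (n + 1) → K} (hb : ∀ q, b q * e ≤ x q) (hM : ∀ q q', M q q' * x q' ≤ x q)
    (q : Fin (n + 1)) : backSubst M b t q * e ≤ x q := by
  have through_x₀ (i : Fin n) (y : K) (hy : y ≤ x 0) : M i.succ 0 * (M 0 0)∗ * y ≤ x i.succ :=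
    calc M i.succ 0 * (M 0 0)∗ * y ≤ M i.succ 0 * x 0 := by
          rw [mul_assoc]
          exact mul_le_mul_right (kstar_mul_le hy (hM 0 0)) _
      _ ≤ x i.succ := hM i.succ 0
  have t_le : ∀ i, t i * e ≤ x i.succ := by
    refine ht.mul_le_of_solution e (fun i => x i.succ) (fun i => ?_) (fun i j => ?_)
    · rw [elimConst, add_mul, mul_assoc _ (b 0)]
      exact add_le (hb i.succ) (through_x₀ i _ (hb 0))
    · rw [elimMatrix, add_mul, mul_assoc _ (M 0 j.succ)]
      exact add_le (hM i.succ j.succ) (through_x₀ i _ (hM 0 j.succ))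
  cases q using Fin.cases with
  | zero =>
    rw [backSubst, Fin.cases_zero, mul_assoc]
    refine kstar_mul_le ?_ (hM 0 0)
    rw [add_mul, Finset.sum_mul]
    refine add_le (hb 0) (Finset.sum_le_of_forall_le fun j _ => ?_)
    rw [mul_assoc]
    exact (mul_le_mul_right (t_le j) _).trans (hM 0 j.succ)
  | succ i => exact t_le i

lemma IsLeastSolution.backSubst (ht : IsLeastSolution (elimMatrix M) (elimConst M b) t) :
    IsLeastSolution M b (backSubst M b t) :=
  ⟨const_le_backSubst ht, mul_backSubst_le ht, fun _ _ => backSubst_mul_le ht⟩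

end Elimination

end LeastSolution

/-- Gaussian elimination, as in `backSubst`. -/
def RegularExpression.leastSolution {α : Type*} :
    (n : ℕ) → (Fin n → Fin n → RegularExpression α) → (Fin n → RegularExpression α) →
      Fin n → RegularExpression α
  | 0, _, _ => Fin.elim0
  | n + 1, M, b =>
    let t := leastSolution n (fun i j => M i.succ j.succ + M i.succ 0 * (M 0 0).star * M 0 j.succ)
      (fun i => b i.succ + M i.succ 0 * (M 0 0).star * b 0)
    Fin.cases ((M 0 0).star * (b 0 + (List.ofFn fun j => M 0 j.succ * t j).sum)) t

lemma isLeastSolution_interp_leastSolution {α K : Type*} [KleeneAlgebra K] (h : α → K) :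
    ∀ (n : ℕ) (M : Fin n → Fin n → RegularExpression α) (b : Fin n → RegularExpression α),
      IsLeastSolution (fun i j => interp h (M i j)) (fun i => interp h (b i))
        (fun i => interp h (leastSolution n M b i))
  | 0, _, _ => isLeastSolution_of_isEmpty _ _ _
  | n + 1, M, b => by
    have ih := isLeastSolution_interp_leastSolution h n
      (fun i j => M i.succ j.succ + M i.succ 0 * (M 0 0).star * M 0 j.succ)
      (fun i => b i.succ + M i.succ 0 * (M 0 0).star * b 0)
    convert IsLeastSolution.backSubst (M := fun i j => interp h (M i j))
      (b := fun i => interp h (b i)) ih using 1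
    funext i
    cases i using Fin.cases <;>
      simp only [leastSolution, backSubst, Fin.cases_zero, Fin.cases_succ, interp_mul, interp_add,
        interp_star, interp_list_sum, List.map_ofFn, Function.comp_def, List.sum_ofFn]

def RegularExpression.leastSolutionOfEquiv {α Q : Type*} {n : ℕ} (σ : Q ≃ Fin n)
    (M : Q → Q → RegularExpression α) (b : Q → RegularExpression α) (q : Q) :
    RegularExpression α :=
  leastSolution n (fun i j => M (σ.symm i) (σ.symm j)) (fun i => b (σ.symm i)) (σ q)

lemma isLeastSolution_interp_leastSolutionOfEquiv {α Q K : Type*} [KleeneAlgebra K] (h : α → K)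
    {n : ℕ} (σ : Q ≃ Fin n) (M : Q → Q → RegularExpression α) (b : Q → RegularExpression α) :
    IsLeastSolution (fun q q' => interp h (M q q')) (fun q => interp h (b q))
      (fun q => interp h (leastSolutionOfEquiv σ M b q)) :=
  .of_comp_equiv σ.symm <| by
    simpa [Function.comp_def, leastSolutionOfEquiv] using isLeastSolution_interp_leastSolution h n
      (fun i j => M (σ.symm i) (σ.symm j)) (fun i => b (σ.symm i))

/-- The Kleene subalgebra of `K` generated by the range of `g`, as a quotient of the regular
expressions over `β`; unlike a subtype of `K`, it lives in the universe of `β`. -/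
def InterpRange {β K : Type*} [KleeneAlgebra K] (g : β → K) : Type _ :=
  Quotient (Setoid.ker (interp g))

namespace InterpRange

variable {β K : Type*} [KleeneAlgebra K] (g : β → K)

def mk (x : RegularExpression β) : InterpRange g := Quotient.mk _ x

def val : InterpRange g → K := Setoid.kerLift (interp g)

lemma val_injective : Function.Injective (val g) := Setoid.kerLift_injective _

lemma interp_out (a : InterpRange g) : interp g (Quotient.out a) = val g a := by
  conv_rhs => rw [← Quotient.out_eq a]
  rfl

noncomputable instance : Zero (InterpRange g) := ⟨mk g 0⟩
noncomputable instance : One (InterpRange g) := ⟨mk g 1⟩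
noncomputable instance : Add (InterpRange g) := ⟨fun a b => mk g (a.out + b.out)⟩
noncomputable instance : Mul (InterpRange g) := ⟨fun a b => mk g (a.out * b.out)⟩
noncomputable instance : KStar (InterpRange g) := ⟨fun a => mk g a.out.star⟩
noncomputable instance : Max (InterpRange g) := ⟨(· + ·)⟩
noncomputable instance : Bot (InterpRange g) := ⟨0⟩
noncomputable instance : Pow (InterpRange g) ℕ := ⟨fun a n => npowRec n a⟩
noncomputable instance : SMul ℕ (InterpRange g) := ⟨nsmulRec⟩
noncomputable instance : NatCast (InterpRange g) := ⟨Nat.unaryCast⟩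
instance : LE (InterpRange g) := ⟨fun a b => val g a ≤ val g b⟩
instance : LT (InterpRange g) := ⟨fun a b => val g a < val g b⟩

lemma val_add (a b : InterpRange g) : val g (a + b) = val g a + val g b := by
  change interp g (a.out + b.out) = _
  rw [interp_add, interp_out, interp_out]

lemma val_mul (a b : InterpRange g) : val g (a * b) = val g a * val g b := by
  change interp g (a.out * b.out) = _
  rw [interp_mul, interp_out, interp_out]

lemma val_kstar (a : InterpRange g) : val g a∗ = (val g a)∗ := by
  change interp g a.out.star = _
  rw [interp_star, interp_out]

lemma val_npow (a : InterpRange g) (n : ℕ) : val g (a ^ n) = val g a ^ n := by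
  change val g (npowRec n a) = _
  induction n with
  | zero => exact (pow_zero _).symm
  | succ n ih => exact (val_mul g (npowRec n a) a).trans (by rw [ih, pow_succ])

lemma val_nsmul (n : ℕ) (a : InterpRange g) : val g (n • a) = n • val g a := by
  change val g (nsmulRec n a) = _
  induction n with
  | zero => exact (zero_nsmul _).symm
  | succ n ih => exact (val_add g (nsmulRec n a) a).trans (by rw [ih, succ_nsmul])

lemma val_natCast (n : ℕ) : val g n = n := by
  change val g (Nat.unaryCast n) = _
  induction n with
  | zero => exact Nat.cast_zero.symm
  | succ n ih => exact (val_add g (Nat.unaryCast n) 1).trans (by rw [ih, Nat.cast_succ]; rfl)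

noncomputable instance : KleeneAlgebra (InterpRange g) :=
  (val_injective g).kleeneAlgebra _ Iff.rfl Iff.rfl rfl rfl (val_add g) (val_mul g)
    (val_nsmul g) (val_npow g) (val_natCast g) (fun a b => (val_add g a b).trans (add_eq_sup _ _))
    bot_eq_zero.symm (val_kstar g)

noncomputable def valHom : InterpRange g →+* K where
  toFun := val g
  map_zero' := rfl
  map_one' := rfl
  map_add' := val_add g
  map_mul' := val_mul g

end InterpRange

universe v w

theorem kle.change_universe {α : Type*} {e f : RegularExpression α} (H : kle.{v} e f) :
    kle.{w} e f := by
  intro K _ h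
  classical
  let L := e.chars ++ f.chars
  let g : ULift.{v} ℕ → K := fun n => (L[n.down]?.map h).getD 0
  let h' : α → InterpRange g := fun a => InterpRange.mk g (char ⟨L.idxOf a⟩)
  have val_h' : ∀ a ∈ L, (InterpRange.valHom g ∘ h') a = h a := fun a ha => by
    change g ⟨L.idxOf a⟩ = h a
    simp [g, List.getElem?_idxOf ha]
  have key : InterpRange.valHom g (interp h' e) ≤ InterpRange.valHom g (interp h' f) :=
    H (InterpRange g) h'
  rwa [map_interp _ _ (InterpRange.val_kstar g), map_interp _ _ (InterpRange.val_kstar g),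
    interp_congr e fun a ha => val_h' a (List.mem_append_left _ ha),
    interp_congr f fun a ha => val_h' a (List.mem_append_right _ ha)] at key

/-- **Least solutions of linear systems**: any linear system `(M, b)` over the regular
expressions, indexed by a finite type `Q`, admits a vector `s` such that for every `e`,
`q ↦ s q * e` is the least `e`-solution of `(M, b)`. -/
theorem linear_system_least_solution {α : Type*} {Q : Type*} [Finite Q]
    (M : Q → Q → RegularExpression α) (b : Q → RegularExpression α) :
    ∃ s : Q → RegularExpression α, ∀ e : RegularExpression α,
      (∀ q, kle (b q * e) (s q * e)) ∧
      (∀ q q', kle (M q q' * (s q' * e)) (s q * e)) ∧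
      (∀ s' : Q → RegularExpression α,
        (∀ q, kle (b q * e) (s' q)) →
        (∀ q q', kle (M q q' * s' q') (s' q)) →
        ∀ q, kle (s q * e) (s' q)) := by
  obtain ⟨n, ⟨σ⟩⟩ := Finite.exists_equiv_fin Q
  refine ⟨leastSolutionOfEquiv σ M b,
    fun e => ⟨fun q K _ h => ?_, fun q q' K _ h => ?_, fun s' hb hM q K _ h => ?_⟩⟩
  all_goals have hs := isLeastSolution_interp_leastSolutionOfEquiv h σ M b
  · exact mul_le_mul_left (hs.const_le q) _
  · simpa only [interp_mul, ← mul_assoc] using mul_le_mul_left (hs.mul_le q q') _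
  · exact hs.mul_le_of_solution _ _ (fun q => (hb q).change_universe K h)
      (fun q q' => (hM q q').change_universe K h) q
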